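/- Let e ≥ 0, let x = (ℓ − t, x_1, x_2) ∈ Δ_ℓ^2 with t = x_1 + x_2 ≤ e, and let v = (ℓ − x_1 − e − 1, x_1 + e + 1, 0), assuming ℓ − x_1 − e − 1 ≥ 0 so that v ∈ Δ_ℓ^2. Then every y ∈ Δ_ℓ^2 satisfying d(v, y) = e and d(x, y) = 2e + 1 is of the form y = (ℓ − x_1 − 2e − 1, x_1 + e + 1 + u, e − u) for some integer u with 0 ≤ u ≤ e; moreover, if x_2 > 0 then u = e. -/

import Mathlib

/-- The discrete `n`-simplex `Δ_ℓ^n`: tuples of `n+1` nonnegative integers summing to `ℓ`. -/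
def simplex (n : ℕ) (ℓ : ℤ) : Set (Fin (n + 1) → ℤ) :=
  {x | (∀ i, 0 ≤ x i) ∧ ∑ i, x i = ℓ}

/-- The metric `d(x,y) = (1/2)∑|x_i − y_i| = ∑_{i : x_i > y_i}(x_i − y_i)` on the simplex. -/
def sdist {n : ℕ} (x y : Fin (n + 1) → ℤ) : ℤ :=
  ∑ i, max (x i - y i) 0

/-- The ball of radius `e` centered at `x` inside the simplex `Δ_ℓ^n`. -/
def ball (n : ℕ) (ℓ : ℤ) (x : Fin (n + 1) → ℤ) (e : ℤ) : Set (Fin (n + 1) → ℤ) :=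
  {w ∈ simplex n ℓ | sdist x w ≤ e}

/-- `C` is an `e`-perfect code in `Δ_ℓ^n`: every element of the simplex is at distance
at most `e` from exactly one codeword. -/
def IsPerfectCode (n : ℕ) (ℓ e : ℤ) (C : Set (Fin (n + 1) → ℤ)) : Prop :=
  C ⊆ simplex n ℓ ∧ ∀ w ∈ simplex n ℓ, ∃! c, c ∈ C ∧ sdist c w ≤ e

/-- The direction vector `f_{i,j}`: entry `1` at position `i`, `-1` at position `j`,
`0` elsewhere (for `i ≠ j`). -/
def fvec (n : ℕ) (i j : Fin (n + 1)) : Fin (n + 1) → ℤ :=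
  fun k => (if k = i then 1 else 0) - (if k = j then 1 else 0)

lemma sdist_three (x y : Fin 3 → ℤ) :
    sdist x y = max (x 0 - y 0) 0 + max (x 1 - y 1) 0 + max (x 2 - y 2) 0 := by
  simp [sdist, Fin.sum_univ_three]

theorem stmt_10 (e ℓ t x1 x2 : ℤ) (he : 0 ≤ e) (ht : t = x1 + x2) (hte : t ≤ e)
    (hx : ![ℓ - t, x1, x2] ∈ simplex 2 ℓ) (hv0 : 0 ≤ ℓ - x1 - e - 1) :
    ∀ y ∈ simplex 2 ℓ,
      sdist ![ℓ - x1 - e - 1, x1 + e + 1, 0] y = e →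
      sdist ![ℓ - t, x1, x2] y = 2 * e + 1 →
      ∃ u : ℤ, 0 ≤ u ∧ u ≤ e ∧
        y = ![ℓ - x1 - 2 * e - 1, x1 + e + 1 + u, e - u] ∧
        (0 < x2 → u = e) := by
  intro y hy h1 h2
  obtain ⟨hynn, hysum⟩ := hy
  have hy0 := hynn 0; have hy1 := hynn 1; have hy2 := hynn 2
  have hx0 := hx.1 0; have hx1 := hx.1 1; have hx2 := hx.1 2
  rw [sdist_three] at h1 h2
  rw [show (∑ i, y i) = y 0 + y 1 + y 2 from Fin.sum_univ_three y] at hysum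
  simp only [Matrix.cons_val_zero, Matrix.cons_val_one, Matrix.head_cons,
    Matrix.cons_val_two, Matrix.tail_cons, max_def] at h1 h2 hx0 hx1 hx2
  have key : y 0 = ℓ - x1 - 2 * e - 1 ∧ x1 + e + 1 ≤ y 1 ∧ y 1 ≤ x1 + 2 * e + 1 ∧
      y 2 = e - (y 1 - (x1 + e + 1)) ∧ (0 < x2 → y 1 = x1 + 2 * e + 1) := by
    split_ifs at h1 h2 <;> omega
  obtain ⟨k0, k1, k2, k3, k4⟩ := key
  have hyeq : y = ![y 0, y 1, y 2] := by
    funext i; fin_cases i <;> rfl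
  refine ⟨y 1 - (x1 + e + 1), by omega, by omega, ?_, by intro h; have := k4 h; omega⟩
  rw [hyeq, k0, k3]
  simp only [Matrix.cons_val_one, Matrix.head_cons, Matrix.cons_val_zero]
  rw [show x1 + e + 1 + (y 1 - (x1 + e + 1)) = y 1 by ring]
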